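/- arXiv:1509.03772 — 2 statements merged into one kernel-verified Lean document; each statement's English description precedes it below -/
import Mathlib

section
/- For k ≥ 2 and n ≥ 1, the group ⟨β, y | y^{-k} = β^{k-1}, β^{n+1} = 1⟩ has y^k central with quotient isomorphic to Z_k * Z_j, where j = gcd(k − 1, n + 1); it is abelian when j = 1 and contains a non-abelian free subgroup when j ≥ 2 and (k,j) ≠ (2,2). -/
/-- `⟨β, y | y^{-k} = β^{k-1}, β^{n+1} = 1⟩`, generators `β = of 0`, `y = of 1`. -/
def relsFam2a (k n : ℕ) : Set (FreeGroup (Fin 2)) :=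
  let b := FreeGroup.of (0 : Fin 2)
  let y := FreeGroup.of (1 : Fin 2)
  {(y ^ k)⁻¹ * (b ^ (k - 1))⁻¹, b ^ (n + 1)}

/-!
From `y^k = β^{-(k-1)}`, the element `y^k` commutes with both generators, so it is central.
Killing it leaves `⟨β, y | y^k, β^{k-1}, β^{n+1}⟩`, and by Bézout the last two relations amount
to `β^j = 1`, which gives `ℤ/k ∗ ℤ/j`. If `j = 1`, Bézout puts `β` in `⟨y⟩`, so the group is
cyclic. If `j ≥ 2`, then `j ∣ k - 1` forces `k ≥ 3`. With `a`, `b` the generators of `ℤ/k ∗ ℤ/j`,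
`(ab)²` and `(a⁻¹b)²` play ping-pong on reduced words, sorted by their first two letters, so
they generate a free group, and so does any lift of them to the group itself.
-/

open Function Monoid Pointwise

theorem pairwise_disjoint_on_fin_two {α : Type*} [PartialOrder α] [OrderBot α] {a b : α} :
    Pairwise (Disjoint on ![a, b]) ↔ Disjoint a b := by
  refine ⟨fun h => h Fin.zero_ne_one, fun h i j hij => ?_⟩
  fin_cases i <;> fin_cases j <;> first | exact absurd rfl hij | exact h | exact h.symm

namespace Monoid.CoprodI.Word

variable {ι : Type*} {G : ι → Type*} [∀ i, Group (G i)]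

def prefixedBy (x y : Σ i, G i) : Set (Word G) := {w | ∃ t, w.toList = x :: y :: t}

theorem prefixedBy_nonempty {i j : ι} (hij : i ≠ j) {p : G i} {q : G j} (hp : p ≠ 1)
    (hq : q ≠ 1) : (prefixedBy (⟨i, p⟩ : Σ i, G i) ⟨j, q⟩).Nonempty :=
  ⟨⟨[⟨i, p⟩, ⟨j, q⟩], by simp [hp, hq], by simp [hij]⟩, [], rfl⟩

theorem disjoint_prefixedBy {x y x' y' : Σ i, G i} (h : (x, y) ≠ (x', y')) :
    Disjoint (prefixedBy x y) (prefixedBy x' y') := by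
  refine Set.disjoint_left.2 fun w ⟨t, ht⟩ ⟨t', ht'⟩ => h ?_
  rw [ht] at ht'
  simp_all

variable [DecidableEq ι] [∀ i, DecidableEq (G i)]

theorem toList_of_smul_of_fstIdx_ne {i : ι} {m : G i} (hm : m ≠ 1) {w : Word G}
    (hw : w.fstIdx ≠ some i) : (of m • w).toList = ⟨i, m⟩ :: w.toList := by
  rw [← cons_eq_smul (h1 := hw) (h2 := hm), cons_toList]

theorem fstIdx_of_smul_or {i : ι} {m : G i} (hm : m ≠ 1) (w : Word G) :
    (of m • w).fstIdx = some i ∨ w.toList = ⟨i, m⁻¹⟩ :: (of m • w).toList := by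
  set p := equivPair i w
  by_cases hp : m * p.head = 1
  · right
    have hsmul : of m • w = p.tail := by rw [of_smul_def]; exact dif_pos hp
    have hhead : p.head = m⁻¹ := eq_inv_of_mul_eq_one_right hp
    have hw : w = cons p.head p.tail p.fstIdx_ne (by simpa [hhead]) :=
      ((equivPair i).symm_apply_apply w).symm.trans (dif_neg _)
    rw [hsmul, hw, cons_toList, hhead]
  · left
    have hsmul : of m • w = cons (m * p.head) p.tail p.fstIdx_ne hp := by
      rw [of_smul_def]; exact dif_neg hp
    rw [hsmul, fstIdx_cons]

theorem fstIdx_of_smul_of_smul {i j : ι} (hij : i ≠ j) {p : G i} {q : G j} (hp : p ≠ 1)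
    (hq : q ≠ 1) {w : Word G} (hw : w ∉ prefixedBy ⟨j, q⁻¹⟩ ⟨i, p⁻¹⟩) :
    (of p • of q • w).fstIdx = some i := by
  refine (fstIdx_of_smul_or hp _).resolve_right fun hpw => ?_
  rcases fstIdx_of_smul_or hq w with hqw | hqw
  · simp [fstIdx, hpw, hij] at hqw
  · exact hw ⟨_, hqw.trans (by rw [hpw])⟩

theorem sq_smul_compl_subset {i j : ι} (hij : i ≠ j) {p : G i} {q : G j} (hp : p ≠ 1)
    (hq : q ≠ 1) :
    (of p * of q) ^ 2 • (prefixedBy ⟨j, q⁻¹⟩ ⟨i, p⁻¹⟩)ᶜ ⊆ prefixedBy ⟨i, p⟩ ⟨j, q⟩ := by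
  rintro _ ⟨w, hw, rfl⟩
  have h₁ := fstIdx_of_smul_of_smul hij hp hq hw
  have h₂ : (of q • of p • of q • w).toList = ⟨j, q⟩ :: (of p • of q • w).toList :=
    toList_of_smul_of_fstIdx_ne hq (by simp [h₁, hij])
  refine ⟨(of p • of q • w).toList, ?_⟩
  simp only [pow_two, mul_smul]
  rw [toList_of_smul_of_fstIdx_ne hp (by simp [fstIdx, h₂, hij.symm]), h₂]

end Monoid.CoprodI.Word

namespace Monoid.CoprodI

open Word

-- `Type` rather than `Type*`: `FreeGroup.injective_lift_of_ping_pong` wants the target group in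
-- the universe of the index type `Fin 2`.
theorem injective_freeGroupLift_sq {ι : Type} {G : ι → Type} [∀ i, Group (G i)] {i j : ι}
    (hij : i ≠ j) {a : G i} {b : G j} (ha : a ^ 2 ≠ 1) (hb : b ≠ 1) :
    Function.Injective (FreeGroup.lift ![(of a * of b) ^ 2, (of a⁻¹ * of b) ^ 2]) := by
  classical
  have ha₁ : a ≠ 1 := by rintro rfl; simp at ha
  have ha₂ : a⁻¹ ≠ a := fun h => ha (by rw [pow_two, ← inv_eq_iff_mul_eq_one, h])
  have hinv : ∀ {k l : ι} (p : G k) (q : G l), ((of p * of q) ^ 2)⁻¹ = (of q⁻¹ * of p⁻¹) ^ 2 :=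
    fun p q => by rw [← inv_pow, mul_inv_rev, map_inv, map_inv]
  refine FreeGroup.injective_lift_of_ping_pong _
    ![prefixedBy ⟨i, a⟩ ⟨j, b⟩, prefixedBy ⟨i, a⁻¹⟩ ⟨j, b⟩]
    ![prefixedBy ⟨j, b⁻¹⟩ ⟨i, a⁻¹⟩, prefixedBy ⟨j, b⁻¹⟩ ⟨i, a⟩] ?_ ?_ ?_ ?_ ?_ ?_
  · exact Fin.forall_fin_two.2
      ⟨prefixedBy_nonempty hij ha₁ hb, prefixedBy_nonempty hij (inv_ne_one.2 ha₁) hb⟩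
  · exact pairwise_disjoint_on_fin_two.2 (disjoint_prefixedBy (by simp [ha₂.symm]))
  · exact pairwise_disjoint_on_fin_two.2 (disjoint_prefixedBy (by simp [ha₂]))
  · intro k l
    fin_cases k <;> fin_cases l <;> exact disjoint_prefixedBy (by simp [hij])
  · refine Fin.forall_fin_two.2 ⟨sq_smul_compl_subset hij ha₁ hb, ?_⟩
    simpa using sq_smul_compl_subset hij (inv_ne_one.2 ha₁) hb
  · refine Fin.forall_fin_two.2 ⟨?_, ?_⟩
    · simpa [hinv, -map_inv] using
        sq_smul_compl_subset hij.symm (inv_ne_one.2 hb) (inv_ne_one.2 ha₁)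
    · simpa [hinv, -map_inv] using sq_smul_compl_subset hij.symm (inv_ne_one.2 hb) ha₁

end Monoid.CoprodI

section CyclicGroups

variable {Q : Type*} [Group Q] {m : ℕ}

theorem Subgroup.pow_gcd_mem (H : Subgroup Q) {g : Q} {a b : ℕ} (ha : g ^ a ∈ H)
    (hb : g ^ b ∈ H) : g ^ Nat.gcd a b ∈ H := by
  rw [← zpow_natCast, Nat.gcd_eq_gcd_ab, zpow_add, zpow_mul, zpow_mul, zpow_natCast,
    zpow_natCast]
  exact H.mul_mem (H.zpow_mem ha _) (H.zpow_mem hb _)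

theorem ofAdd_one_pow_eq_one_iff {N : ℕ} :
    Multiplicative.ofAdd (1 : ZMod m) ^ N = 1 ↔ m ∣ N := by
  rw [← ofAdd_nsmul, nsmul_one, ofAdd_eq_one, ZMod.natCast_eq_zero_iff]

theorem map_ofAdd_one_pow {F : Type*} [FunLike F (Multiplicative (ZMod m)) Q]
    [MonoidHomClass F (Multiplicative (ZMod m)) Q] (f : F) :
    f (Multiplicative.ofAdd 1) ^ m = 1 := by
  rw [← map_pow, ofAdd_one_pow_eq_one_iff.2 dvd_rfl, map_one]

def zmodMulLift {z : Q} (hz : z ^ m = 1) : Multiplicative (ZMod m) →* Q :=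
  AddMonoidHom.toMultiplicativeLeft <|
    ZMod.lift m ⟨zmultiplesHom _ (Additive.ofMul z), by
      simpa [← ofMul_pow] using congrArg Additive.ofMul hz⟩

@[simp]
theorem zmodMulLift_ofAdd_one {z : Q} (hz : z ^ m = 1) :
    zmodMulLift hz (Multiplicative.ofAdd 1) = z := by
  simp only [zmodMulLift, AddMonoidHom.toMultiplicativeLeft_apply_apply, toAdd_ofAdd]
  rw [← Int.cast_one, ZMod.lift_coe]
  simp

theorem monoidHom_ext_zmod {f g : Multiplicative (ZMod m) →* Q}
    (h : f (Multiplicative.ofAdd 1) = g (Multiplicative.ofAdd 1)) : f = g := by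
  refine MonoidHom.ext fun x => ?_
  obtain ⟨c, hc⟩ := ZMod.intCast_surjective (Multiplicative.toAdd x)
  rw [← ofAdd_toAdd x, ← hc, ← zsmul_one, ofAdd_zsmul, map_zpow, map_zpow, h]

end CyclicGroups

theorem PresentedGroup.mk_of {α : Type*} (rels : Set (FreeGroup α)) (x : α) :
    PresentedGroup.mk rels (FreeGroup.of x) = PresentedGroup.of x :=
  rfl

namespace Fam2a

open PresentedGroup

variable {k n : ℕ}

local notation "Γ" => PresentedGroup (relsFam2a k n)

theorem of_one_pow : (of 1 : Γ) ^ k = ((of 0) ^ (k - 1))⁻¹ := by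
  have h : mk (relsFam2a k n) (FreeGroup.of 1 ^ k) = mk _ (FreeGroup.of 0 ^ (k - 1))⁻¹ :=
    mk_eq_mk_of_inv_mul_mem (Set.mem_insert _ _)
  simpa only [map_pow, map_inv, mk_of] using h

theorem of_zero_pow : (of 0 : Γ) ^ (n + 1) = 1 := by
  simpa only [map_pow, mk_of] using one_of_mem (rels := relsFam2a k n) (Set.mem_insert_of_mem _ rfl)

section Lift

variable {Q : Type*} [Group Q] {u v : Q} (hu : u ^ k = 1) (hv : v ^ Nat.gcd (k - 1) (n + 1) = 1)

def lift : Γ →* Q :=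
  toGroup (f := ![v, u]) <| by
    have hv' : ∀ {N}, Nat.gcd (k - 1) (n + 1) ∣ N → v ^ N = 1 := fun ⟨c, hc⟩ => by
      rw [hc, pow_mul, hv, one_pow]
    rintro r (rfl | rfl)
    · simp [hu, hv' (Nat.gcd_dvd_left _ _)]
    · simp [hv' (Nat.gcd_dvd_right _ _)]

@[simp]
theorem lift_of_zero : lift hu hv (of 0) = v :=
  toGroup.of _

@[simp]
theorem lift_of_one : lift hu hv (of 1) = u :=
  toGroup.of _

end Lift

theorem of_one_pow_mem_center : (of 1 : Γ) ^ k ∈ Subgroup.center Γ := by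
  suffices h : ⊤ ≤ Subgroup.centralizer {(of 1 : Γ) ^ k} from
    Subgroup.mem_center_iff.2 fun g => Subgroup.mem_centralizer_singleton_iff.1 (h trivial)
  rw [← closure_range_of, Subgroup.closure_le]
  rintro _ ⟨i, rfl⟩
  rw [SetLike.mem_coe, Subgroup.mem_centralizer_singleton_iff]
  fin_cases i
  · rw [of_one_pow]
    exact ((Commute.refl _).pow_right _).inv_right.eq
  · exact ((Commute.refl _).pow_right _).eq

theorem of_zero_mem_zpowers_of_one (h : Nat.gcd (k - 1) (n + 1) = 1) :
    (of 0 : Γ) ∈ Subgroup.zpowers (of 1) := by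
  have hk : (of 0 : Γ) ^ (k - 1) ∈ Subgroup.zpowers (of 1) := by
    rw [← inv_inv (of 0 ^ (k - 1)), ← of_one_pow]
    exact inv_mem (pow_mem (Subgroup.mem_zpowers _) _)
  have hn : (of 0 : Γ) ^ (n + 1) ∈ Subgroup.zpowers (of 1) := by
    rw [of_zero_pow]
    exact one_mem _
  simpa [h] using Subgroup.pow_gcd_mem _ hk hn

theorem zpowers_of_one_eq_top (h : Nat.gcd (k - 1) (n + 1) = 1) :
    Subgroup.zpowers (of 1 : Γ) = ⊤ := by
  rw [eq_top_iff, ← closure_range_of, Subgroup.closure_le]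
  rintro _ ⟨i, rfl⟩
  fin_cases i
  · exact of_zero_mem_zpowers_of_one h
  · exact Subgroup.mem_zpowers _

theorem mul_comm_of_gcd_eq_one (h : Nat.gcd (k - 1) (n + 1) = 1) (x y : Γ) :
    x * y = y * x := by
  obtain ⟨a, rfl⟩ := Subgroup.mem_zpowers_iff.1 (zpowers_of_one_eq_top h ▸ Subgroup.mem_top x)
  obtain ⟨b, rfl⟩ := Subgroup.mem_zpowers_iff.1 (zpowers_of_one_eq_top h ▸ Subgroup.mem_top y)
  exact Commute.zpow_zpow_self _ _ _

theorem exists_injective_freeGroup (hk : 2 ≤ k) (hj : 2 ≤ Nat.gcd (k - 1) (n + 1)) :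
    ∃ f : FreeGroup (Fin 2) →* Γ, Function.Injective f := by
  set j := Nat.gcd (k - 1) (n + 1)
  have hk₃ : 3 ≤ k := by
    have := Nat.le_of_dvd (by omega) (Nat.gcd_dvd_left (k - 1) (n + 1))
    omega
  -- Mathlib's normal form for reduced words lives in `CoprodI`, not in `Coprod`.
  let H : Fin 2 → Type := fun i => Multiplicative (ZMod (![k, j] i))
  let a : H 0 := Multiplicative.ofAdd 1
  let b : H 1 := Multiplicative.ofAdd 1
  have ha : a ^ 2 ≠ 1 :=
    (ofAdd_one_pow_eq_one_iff (m := k)).not.2 (Nat.not_dvd_of_pos_of_lt two_pos (by omega))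
  have hb : b ≠ 1 := fun h => by
    have := Nat.le_of_dvd one_pos ((ofAdd_one_pow_eq_one_iff (m := j)).1 ((pow_one b).trans h))
    omega
  have hu : (CoprodI.of a) ^ k = 1 := map_ofAdd_one_pow (CoprodI.of (M := H) (i := 0))
  have hv : (CoprodI.of b) ^ j = 1 := map_ofAdd_one_pow (CoprodI.of (M := H) (i := 1))
  refine ⟨FreeGroup.lift ![(of 1 * of 0) ^ 2, ((of 1)⁻¹ * of 0) ^ 2], ?_⟩
  refine Function.Injective.of_comp (f := lift hu hv) ?_
  convert CoprodI.injective_freeGroupLift_sq Fin.zero_ne_one ha hb using 1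
  rw [← MonoidHom.coe_comp]
  congr 1
  refine FreeGroup.ext_hom _ _ fun i => ?_
  fin_cases i <;> simp

section Quotient

local notation "Nᵧ" => Subgroup.normalClosure {(of 1 : Γ) ^ k}
local notation "C" =>
  Coprod (Multiplicative (ZMod k)) (Multiplicative (ZMod (Nat.gcd (k - 1) (n + 1))))

theorem mk_of_one_pow : (QuotientGroup.mk' Nᵧ (of 1)) ^ k = 1 := by
  rw [← map_pow, QuotientGroup.mk'_apply, QuotientGroup.eq_one_iff]
  exact Subgroup.subset_normalClosure rfl

theorem mk_of_zero_pow_gcd : (QuotientGroup.mk' Nᵧ (of 0)) ^ Nat.gcd (k - 1) (n + 1) = 1 := by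
  have hk : (QuotientGroup.mk' Nᵧ (of 0)) ^ (k - 1) ∈ (⊥ : Subgroup (Γ ⧸ Nᵧ)) := by
    rw [← map_pow, ← inv_inv (of 0 ^ (k - 1)), ← of_one_pow, map_inv, map_pow, mk_of_one_pow]
    simp
  have hn : (QuotientGroup.mk' Nᵧ (of 0)) ^ (n + 1) ∈ (⊥ : Subgroup (Γ ⧸ Nᵧ)) := by
    rw [← map_pow, of_zero_pow, map_one]
    exact one_mem _
  exact Subgroup.mem_bot.1 (Subgroup.pow_gcd_mem _ hk hn)

def quotientToCoprod : Γ ⧸ Nᵧ →* C :=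
  QuotientGroup.lift _ (lift (u := Coprod.inl (Multiplicative.ofAdd 1))
      (v := Coprod.inr (Multiplicative.ofAdd 1))
      (map_ofAdd_one_pow _) (map_ofAdd_one_pow _)) <|
    Subgroup.normalClosure_le_normal <| Set.singleton_subset_iff.2 <| by
      rw [SetLike.mem_coe, MonoidHom.mem_ker, map_pow, lift_of_one, map_ofAdd_one_pow]

def coprodToQuotient : C →* Γ ⧸ Nᵧ :=
  Coprod.lift (zmodMulLift mk_of_one_pow) (zmodMulLift mk_of_zero_pow_gcd)

def quotientEquivCoprod : Γ ⧸ Nᵧ ≃* C :=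
  quotientToCoprod.toMulEquiv coprodToQuotient
    (QuotientGroup.monoidHom_ext _ <| PresentedGroup.ext fun i => by
      fin_cases i <;> simp [quotientToCoprod, coprodToQuotient])
    (Coprod.hom_ext (monoidHom_ext_zmod <| by simp [quotientToCoprod, coprodToQuotient])
      (monoidHom_ext_zmod <| by simp [quotientToCoprod, coprodToQuotient]))

end Quotient

end Fam2a

theorem stmt_15_general (k n : ℕ) (hk : 2 ≤ k)
    (j : ℕ) (hj : j = Nat.gcd (k - 1) (n + 1)) :
    ((PresentedGroup.of 1 : PresentedGroup (relsFam2a k n)) ^ k ∈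
      Subgroup.center (PresentedGroup (relsFam2a k n))) ∧
    Nonempty
      ((PresentedGroup (relsFam2a k n) ⧸
          Subgroup.normalClosure
            ({(PresentedGroup.of 1 : PresentedGroup (relsFam2a k n)) ^ k} :
              Set (PresentedGroup (relsFam2a k n)))) ≃*
        Monoid.Coprod (Multiplicative (ZMod k)) (Multiplicative (ZMod j))) ∧
    (j = 1 → ∀ x y : PresentedGroup (relsFam2a k n), x * y = y * x) ∧
    (2 ≤ j → ¬(k = 2 ∧ j = 2) →
      ∃ f : FreeGroup (Fin 2) →* PresentedGroup (relsFam2a k n),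
        Function.Injective f) := by
  subst hj
  exact ⟨Fam2a.of_one_pow_mem_center, ⟨Fam2a.quotientEquivCoprod⟩, Fam2a.mul_comm_of_gcd_eq_one,
    fun hj _ => Fam2a.exists_injective_freeGroup hk hj⟩

/-- In `G_{(2a)} = ⟨β, y | y^{-k} = β^{k-1}, β^{n+1} = 1⟩`, the element `y^k` is
central with quotient `ℤ/k ∗ ℤ/j`, `j = gcd(k − 1, n + 1)`; the group is abelian
when `j = 1` and contains a non-abelian free subgroup when `j ≥ 2`, `(k,j) ≠ (2,2)`. -/
theorem stmt_15 (k n : ℕ) (hk : 2 ≤ k) (hn : 1 ≤ n)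
    (j : ℕ) (hj : j = Nat.gcd (k - 1) (n + 1)) :
    ((PresentedGroup.of 1 : PresentedGroup (relsFam2a k n)) ^ k ∈
      Subgroup.center (PresentedGroup (relsFam2a k n))) ∧
    Nonempty
      ((PresentedGroup (relsFam2a k n) ⧸
          Subgroup.normalClosure
            ({(PresentedGroup.of 1 : PresentedGroup (relsFam2a k n)) ^ k} :
              Set (PresentedGroup (relsFam2a k n)))) ≃*
        Monoid.Coprod (Multiplicative (ZMod k)) (Multiplicative (ZMod j))) ∧
    (j = 1 → ∀ x y : PresentedGroup (relsFam2a k n), x * y = y * x) ∧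
    (2 ≤ j → ¬(k = 2 ∧ j = 2) →
      ∃ f : FreeGroup (Fin 2) →* PresentedGroup (relsFam2a k n),
        Function.Injective f) :=
  stmt_15_general k n hk j hj
end

section
/- The group ⟨α, β, y | α = y⁻³β², [β, y³] = 1, α = 1, βαβ = 1⟩ is isomorphic to the free product Z₂ * Z₃ ≅ PSL(2, Z). -/
/-!
The relations force `α = 1`, `β² = 1` and `y³ = 1`, and then the commutator relation is automatic,
so the group is `⟨β⟩ ∗ ⟨y⟩ ≅ ℤ/2 ∗ ℤ/3`. This free product maps onto `PSL(2, ℤ)` by `β ↦ S`,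
`y ↦ TS`, because `S² = (TS)³ = -1` and `S, T` generate `SL(2, ℤ)`. The map is injective by
ping-pong on the upper half-plane: `S : z ↦ -1/z` sends `Re z > 0` to `Re z < 0`, while
`TS : z ↦ 1 - 1/z` sends `Re z < 0` to `Re z > 1` and `Re z > 1` to `Re z > 0`, so both `TS` and
`(TS)²` send the left half into the right half.
-/

/-- `⟨α, β, y | α = y⁻³β², [β, y³] = 1, α = 1, βαβ = 1⟩`,
generators `α = of 0`, `β = of 1`, `y = of 2`. -/
def relsStmt19 : Set (FreeGroup (Fin 3)) :=
  let a := FreeGroup.of (0 : Fin 3)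
  let b := FreeGroup.of (1 : Fin 3)
  let y := FreeGroup.of (2 : Fin 3)
  {a * ((y ^ 3)⁻¹ * b ^ 2)⁻¹,
   b * y ^ 3 * b⁻¹ * (y ^ 3)⁻¹,
   a,
   b * a * b}

open Multiplicative

section ZModHom

variable {G : Type*} [Group G] {n : ℕ}

def zmodLift (n : ℕ) (g : G) (hg : g ^ n = 1) : Multiplicative (ZMod n) →* G :=
  AddMonoidHom.toMultiplicativeLeft <| ZMod.lift n
    ⟨zmultiplesHom (Additive G) (Additive.ofMul g), by
      simpa [← ofMul_zpow] using congrArg Additive.ofMul hg⟩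

lemma zmodLift_ofAdd_intCast (g : G) (hg : g ^ n = 1) (k : ℤ) :
    zmodLift n g hg (ofAdd (k : ZMod n)) = g ^ k := by
  simp [zmodLift, ZMod.lift_coe, ← ofMul_zpow]

lemma zmodLift_ofAdd_one (g : G) (hg : g ^ n = 1) : zmodLift n g hg (ofAdd 1) = g := by
  simpa using zmodLift_ofAdd_intCast g hg 1

lemma zmodLift_apply [NeZero n] (g : G) (hg : g ^ n = 1) (x : Multiplicative (ZMod n)) :
    zmodLift n g hg x = g ^ (toAdd x).val := by
  have h := zmodLift_ofAdd_intCast g hg (toAdd x).val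
  rwa [Int.cast_natCast, ZMod.natCast_zmod_val, ofAdd_toAdd, zpow_natCast] at h

lemma zmodLift_eq_pow_of_ne_one [NeZero n] (g : G) (hg : g ^ n = 1)
    {x : Multiplicative (ZMod n)} (hx : x ≠ 1) : ∃ k, 0 < k ∧ k < n ∧ zmodLift n g hg x = g ^ k :=
  ⟨(toAdd x).val, ZMod.val_pos.mpr (toAdd_eq_zero.not.mpr hx), ZMod.val_lt _,
    zmodLift_apply g hg x⟩

lemma MonoidHom.ext_mzmod {M : Type*} [Monoid M] {f g : Multiplicative (ZMod n) →* M}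
    (h : f (ofAdd 1) = g (ofAdd 1)) : f = g := by
  have hq : Function.Surjective (AddMonoidHom.toMultiplicative (Int.castAddHom (ZMod n))) :=
    ZMod.intCast_surjective
  exact (MonoidHom.cancel_right hq).mp (MonoidHom.ext_mint (by simpa using h))

end ZModHom

universe u

namespace Monoid.Coprod

open Cardinal Pointwise

variable {G H : Type u} [Group G] [Group H]

-- Mathlib's ping-pong lemma is about `CoprodI`, so `G ∗ H` is compared with the free product of
-- the `Bool`-indexed family `cond b G H`.
instance instGroupCond : ∀ b, Group (cond b G H)
  | true => ‹Group G›
  | false => ‹Group H›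

def toCoprodI : Coprod G H →* CoprodI (fun b => cond b G H) :=
  Coprod.lift (CoprodI.of (M := fun b => cond b G H) (i := true))
    (CoprodI.of (M := fun b => cond b G H) (i := false))

def ofCoprodI : CoprodI (fun b => cond b G H) →* Coprod G H :=
  CoprodI.lift fun
    | true => Coprod.inl
    | false => Coprod.inr

lemma ofCoprodI_comp_toCoprodI : (ofCoprodI (G := G) (H := H)).comp toCoprodI = .id _ := by
  ext <;> simp [toCoprodI, ofCoprodI]

lemma toCoprodI_injective : Function.Injective (toCoprodI (G := G) (H := H)) :=
  Function.LeftInverse.injective (g := ofCoprodI) (DFunLike.congr_fun ofCoprodI_comp_toCoprodI)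

theorem lift_injective_of_ping_pong {K α : Type*} [Group K] [MulAction K α] (φ : G →* K)
    (ψ : H →* K) (hcard : 3 ≤ #G ∨ 3 ≤ #H) (X Y : Set α) (hX : X.Nonempty) (hY : Y.Nonempty)
    (hXY : Disjoint X Y) (hφ : ∀ g ≠ 1, φ g • Y ⊆ X) (hψ : ∀ h ≠ 1, ψ h • X ⊆ Y) :
    Function.Injective (Coprod.lift φ ψ) := by
  let f : ∀ b, cond b G H →* K := fun
    | true => φ
    | false => ψ
  let Z : Bool → Set α := fun b => cond b X Y
  have hlift : Coprod.lift φ ψ = (CoprodI.lift f).comp toCoprodI := by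
    ext <;> simp [toCoprodI, f]
  rw [hlift, MonoidHom.coe_comp]
  refine (CoprodI.lift_injective_of_ping_pong f ?_ Z ?_ ?_ ?_).comp toCoprodI_injective
  · exact hcard.elim (fun h => .inr ⟨true, h⟩) (fun h => .inr ⟨false, h⟩)
  · rintro (_ | _) <;> assumption
  · rintro (_ | _) (_ | _) h <;> first | exact absurd rfl h | exact hXY | exact hXY.symm
  · rintro (_ | _) (_ | _) h <;> first | exact absurd rfl h | exact hφ | exact hψ

end Monoid.Coprod

namespace relsStmt19

open PresentedGroup Monoid

local notation "C₂" => Multiplicative (ZMod 2)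
local notation "C₃" => Multiplicative (ZMod 3)

lemma of_zero : (of 0 : PresentedGroup relsStmt19) = 1 := one_of_mem (by simp [relsStmt19])

lemma of_one_sq : (of 1 : PresentedGroup relsStmt19) ^ 2 = 1 := by
  have h : (of 1 * of 0 * of 1 : PresentedGroup relsStmt19) = 1 :=
    one_of_mem (by simp [relsStmt19])
  rwa [of_zero, mul_one, ← sq] at h

lemma of_two_pow_three : (of 2 : PresentedGroup relsStmt19) ^ 3 = 1 := by
  have h : (of 0 * ((of 2 ^ 3)⁻¹ * of 1 ^ 2)⁻¹ : PresentedGroup relsStmt19) = 1 :=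
    one_of_mem (by simp [relsStmt19])
  rwa [of_zero, of_one_sq, one_mul, mul_one, inv_inv] at h

def toCoprod : PresentedGroup relsStmt19 →* Coprod C₂ C₃ :=
  toGroup (f := ![1, .inl (ofAdd 1), .inr (ofAdd 1)]) <| by
    have h₂ : (Coprod.inl (ofAdd 1) : Coprod C₂ C₃) ^ 2 = 1 := by
      rw [← map_pow, (by decide : (ofAdd 1 : C₂) ^ 2 = 1), map_one]
    have h₃ : (Coprod.inr (ofAdd 1) : Coprod C₂ C₃) ^ 3 = 1 := by
      rw [← map_pow, (by decide : (ofAdd 1 : C₃) ^ 3 = 1), map_one]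
    simp [relsStmt19, ← sq, h₂, h₃]

def ofCoprod : Coprod C₂ C₃ →* PresentedGroup relsStmt19 :=
  Coprod.lift (zmodLift 2 (of 1) of_one_sq) (zmodLift 3 (of 2) of_two_pow_three)

def equivCoprod : PresentedGroup relsStmt19 ≃* Coprod C₂ C₃ :=
  toCoprod.toMulEquiv ofCoprod
    (by ext i; fin_cases i <;> simp [toCoprod, ofCoprod, zmodLift_ofAdd_one, of_zero])
    (by
      apply Coprod.hom_ext <;> apply MonoidHom.ext_mzmod <;>
        simp [toCoprod, ofCoprod, zmodLift_ofAdd_one])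

end relsStmt19

namespace ModularGroup

open UpperHalfPlane Complex Monoid
open scoped MatrixGroups Pointwise

local notation "C₂" => Multiplicative (ZMod 2)
local notation "C₃" => Multiplicative (ZMod 3)

lemma eq_one_or_eq_neg_one_of_mem_center {g : SL(2, ℤ)} (hg : g ∈ Subgroup.center SL(2, ℤ)) :
    g = 1 ∨ g = -1 := by
  obtain ⟨r, hr, hrg⟩ := Matrix.SpecialLinearGroup.mem_center_iff.mp hg
  rw [Fintype.card_fin, sq_eq_one_iff] at hr
  rcases hr with rfl | rfl
  · left; ext1; rw [← hrg]; simp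
  · right; ext1; rw [← hrg]; simp

lemma smul_eq_self_of_mem_center {g : SL(2, ℤ)} (hg : g ∈ Subgroup.center SL(2, ℤ)) (z : ℍ) :
    g • z = z := by
  rcases eq_one_or_eq_neg_one_of_mem_center hg with rfl | rfl
  · exact one_smul _ z
  · rw [SL_neg_smul, one_smul]

noncomputable def pslToPerm : PSL(2, ℤ) →* Equiv.Perm ℍ :=
  QuotientGroup.lift _ (MulAction.toPermHom SL(2, ℤ) ℍ) fun _ hg =>
    Equiv.ext (smul_eq_self_of_mem_center hg)

noncomputable instance : MulAction PSL(2, ℤ) ℍ := MulAction.compHom ℍ pslToPerm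

lemma re_S_smul (z : ℍ) : (S • z).re = -z.re / normSq (z : ℂ) := by
  rw [modular_S_smul, mk_re, inv_re, normSq_neg, neg_re, coe_re]

lemma re_T_mul_S_smul (z : ℍ) : ((T * S) • z).re = 1 - z.re / normSq (z : ℂ) := by
  rw [mul_smul, modular_T_smul, vadd_re, re_S_smul, neg_div, sub_eq_add_neg]

lemma re_S_smul_neg {z : ℍ} (hz : 0 < z.re) : (S • z).re < 0 := by
  rw [re_S_smul]
  exact div_neg_of_neg_of_pos (neg_neg_of_pos hz) z.normSq_pos

lemma one_lt_re_T_mul_S_smul {z : ℍ} (hz : z.re < 0) : 1 < ((T * S) • z).re := by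
  rw [re_T_mul_S_smul]
  have := div_neg_of_neg_of_pos hz z.normSq_pos
  linarith

lemma re_T_mul_S_smul_pos {z : ℍ} (hz : 1 < z.re) : 0 < ((T * S) • z).re := by
  rw [re_T_mul_S_smul, sub_pos, div_lt_one z.normSq_pos, normSq_apply, coe_re]
  nlinarith [mul_self_nonneg z.im]

lemma S_sq : S ^ 2 = -1 := by decide

lemma T_mul_S_pow_three : (T * S) ^ 3 = -1 := by decide

lemma neg_one_mem_center : (-1 : SL(2, ℤ)) ∈ Subgroup.center SL(2, ℤ) :=
  Subgroup.mem_center_iff.mpr fun g => by simp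

lemma coe_S_sq : (S : PSL(2, ℤ)) ^ 2 = 1 := by
  rw [← QuotientGroup.mk_pow, S_sq, QuotientGroup.eq_one_iff]
  exact neg_one_mem_center

lemma coe_T_mul_S_pow_three : ((T * S : SL(2, ℤ)) : PSL(2, ℤ)) ^ 3 = 1 := by
  rw [← QuotientGroup.mk_pow, T_mul_S_pow_three, QuotientGroup.eq_one_iff]
  exact neg_one_mem_center

noncomputable def coprodToPSL : Coprod C₂ C₃ →* PSL(2, ℤ) :=
  Coprod.lift (zmodLift 2 _ coe_S_sq) (zmodLift 3 _ coe_T_mul_S_pow_three)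

lemma coprodToPSL_injective : Function.Injective coprodToPSL := by
  refine Coprod.lift_injective_of_ping_pong _ _ (.inr (by simp)) {z : ℍ | z.re < 0}
    {z : ℍ | 0 < z.re} ⟨(-1 : ℝ) +ᵥ .I, by simp⟩ ⟨(1 : ℝ) +ᵥ .I, by simp⟩
    (Set.disjoint_left.mpr fun z (hz : z.re < 0) (hz' : 0 < z.re) => hz.not_gt hz') ?_ ?_
  · intro g hg
    obtain ⟨k, hk₀, hk₂, hgk⟩ := zmodLift_eq_pow_of_ne_one _ coe_S_sq hg
    obtain rfl : k = 1 := by omega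
    rw [hgk, pow_one, Set.smul_set_subset_iff]
    exact fun z hz => re_S_smul_neg hz
  · intro g hg
    obtain ⟨k, hk₀, hk₃, hgk⟩ := zmodLift_eq_pow_of_ne_one _ coe_T_mul_S_pow_three hg
    rw [hgk, Set.smul_set_subset_iff]
    intro z (hz : z.re < 0)
    interval_cases k
    · exact zero_lt_one.trans (one_lt_re_T_mul_S_smul hz)
    · rw [sq, mul_smul]
      exact re_T_mul_S_smul_pos (one_lt_re_T_mul_S_smul hz)

lemma coprodToPSL_surjective : Function.Surjective coprodToPSL := by
  have hS : (S : PSL(2, ℤ)) ∈ coprodToPSL.range :=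
    ⟨.inl (ofAdd 1), by simp [coprodToPSL, zmodLift_ofAdd_one]⟩
  have hTS : ((T * S : SL(2, ℤ)) : PSL(2, ℤ)) ∈ coprodToPSL.range :=
    ⟨.inr (ofAdd 1), by simp [coprodToPSL, zmodLift_ofAdd_one]⟩
  have hT : (T : PSL(2, ℤ)) ∈ coprodToPSL.range := by
    simpa using mul_mem hTS (inv_mem hS)
  have : (QuotientGroup.mk' _).range ≤ coprodToPSL.range := by
    rw [MonoidHom.range_eq_map, ← SpecialLinearGroup.SL2Z_generators, MonoidHom.map_closure,
      Subgroup.closure_le]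
    rintro _ ⟨g, rfl | rfl, rfl⟩
    exacts [hS, hT]
  rw [QuotientGroup.range_mk', top_le_iff, MonoidHom.range_eq_top] at this
  exact this

noncomputable def coprodEquivPSL : Coprod C₂ C₃ ≃* PSL(2, ℤ) :=
  .ofBijective coprodToPSL ⟨coprodToPSL_injective, coprodToPSL_surjective⟩

end ModularGroup

/-- The group `⟨α, β, y | α = y⁻³β², [β, y³] = 1, α = 1, βαβ = 1⟩` is isomorphic to
`ℤ/2 ∗ ℤ/3 ≅ PSL(2, ℤ)`. -/
theorem stmt_19 :
    Nonempty (PresentedGroup relsStmt19 ≃*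
      Monoid.Coprod (Multiplicative (ZMod 2)) (Multiplicative (ZMod 3))) ∧
    Nonempty (PresentedGroup relsStmt19 ≃*
      (Matrix.SpecialLinearGroup (Fin 2) ℤ ⧸
        Subgroup.center (Matrix.SpecialLinearGroup (Fin 2) ℤ))) :=
  ⟨⟨relsStmt19.equivCoprod⟩, ⟨relsStmt19.equivCoprod.trans ModularGroup.coprodEquivPSL⟩⟩
end
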